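/- arXiv:1610.01753 — 3 statements merged into one kernel-verified Lean document; each statement's English description precedes it below -/
import Mathlib

section
/- Let T be a finite tree (connected acyclic simple graph) with n ≥ 2 vertices, a root vertex r, and height D (the maximum distance from r to a vertex), and let k be a positive integer. Then there exist k walks in T, each starting at r and each of length (number of edges) at most D + ⌈2(n−1)/k⌉, such that every vertex of T lies on at least one of the walks. In particular, k agents that know T in advance can explore T in O(n/k + D) rounds. -/
/-!
Grow a closed walk from the root greedily: a vertex `y` not yet visited but adjacent to a visited
vertex `x` is added by splicing the detour `x → y → x` into the walk, so every new vertex costs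
two edges and the final tour through all `n` vertices has length at most `2 (n - 1)`. Cut the tour
into `k` consecutive pieces of length at most `⌈2 (n - 1) / k⌉`; the `i`-th walk goes from the
root to the start of the `i`-th piece along a shortest path, of length at most the height `D`,
and then follows the piece.
-/

/-- A rooted tree: a finite connected acyclic simple graph on labeled
vertices (natural numbers) with a distinguished root. `verts` is the (finite)
vertex set; all edges join vertices of `verts` and every vertex of `verts` is
reachable from the root. -/
structure ExplorationTree where
  G : SimpleGraph ℕ
  verts : Finset ℕ
  root : ℕ
  root_mem : root ∈ verts
  adj_mem : ∀ u v : ℕ, G.Adj u v → u ∈ verts ∧ v ∈ verts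
  reach : ∀ v ∈ verts, G.Reachable root v
  acyclic : G.IsAcyclic

namespace ExplorationTree

/-- The number of vertices of a rooted tree. -/
def card (T : ExplorationTree) : ℕ := T.verts.card

/-- The height of a rooted tree: the maximum graph distance from the root. -/
noncomputable def height (T : ExplorationTree) : ℕ :=
  T.verts.sup fun v => T.G.dist T.root v

end ExplorationTree

/-- `CoverWalks T k ℓ`: there exist `k` walks in `T`, each starting at the
root and of length (number of edges) at most `ℓ`, covering all vertices of `T`. -/
def CoverWalks (T : ExplorationTree) (k ℓ : ℕ) : Prop :=
  ∃ (e : Fin k → ℕ) (w : ∀ i : Fin k, T.G.Walk T.root (e i)),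
    (∀ i, (w i).length ≤ ℓ) ∧ ∀ v ∈ T.verts, ∃ i, v ∈ (w i).support

open Finset

theorem Nat.exists_lt_mul_le_le_mul_add {j c k : ℕ} (hk : 0 < k) (hj : j ≤ c * k) :
    ∃ i < k, i * c ≤ j ∧ j ≤ i * c + c := by
  rcases Nat.eq_zero_or_pos c with rfl | hc
  · exact ⟨0, hk, by simp_all⟩
  have hdiv := Nat.div_add_mod (j - 1) c
  have hmod := Nat.mod_lt (j - 1) hc
  refine ⟨(j - 1) / c, ?_, ?_, ?_⟩
  · rw [Nat.div_lt_iff_lt_mul hc]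
    rcases j with _ | j
    · simpa using Nat.mul_pos hk hc
    · rw [mul_comm]; omega
  · rw [mul_comm]; omega
  · rw [mul_comm]; omega

namespace SimpleGraph.Walk

variable {V : Type*} {G : SimpleGraph V}

lemma exists_support_toFinset_eq_insert_of_adj [DecidableEq V] {u v x y : V} (w : G.Walk u v)
    (hx : x ∈ w.support) (hxy : G.Adj x y) :
    ∃ w' : G.Walk u v, w'.length = w.length + 2 ∧
      w'.support.toFinset = insert y w.support.toFinset := by
  have hw := w.take_spec hx
  refine ⟨(w.takeUntil x hx).append (cons hxy (cons hxy.symm (w.dropUntil x hx))), ?_, ?_⟩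
  · have := congrArg length hw
    simp only [length_append, length_cons] at this ⊢
    omega
  · have hsupp (z : V) : z ∈ w.support ↔
        z ∈ (w.takeUntil x hx).support ∨ z ∈ (w.dropUntil x hx).support := by
      rw [← mem_support_append_iff, hw]
    ext z
    simp only [List.mem_toFinset, mem_insert, mem_support_append_iff, support_cons,
      List.mem_cons, hsupp]
    have := (w.dropUntil x hx).start_mem_support
    grind

lemma exists_extend_to_mem_support [DecidableEq V] {u v x z : V} (P : G.Walk x z)
    (w : G.Walk u v) (hx : x ∈ w.support) :
    ∃ w' : G.Walk u v, w.support.toFinset ⊆ w'.support.toFinset ∧ z ∈ w'.support ∧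
      w'.length + 2 * #w.support.toFinset ≤ w.length + 2 * #w'.support.toFinset := by
  induction P generalizing w with
  | nil => exact ⟨w, subset_rfl, hx, le_rfl⟩
  | @cons x y z hxy P ih =>
    by_cases hy : y ∈ w.support
    · exact ih w hy
    obtain ⟨w₁, hlen, hsupp⟩ := w.exists_support_toFinset_eq_insert_of_adj hx hxy
    have hcard : #w₁.support.toFinset = #w.support.toFinset + 1 := by
      rw [hsupp, card_insert_of_notMem (by simpa using hy)]
    obtain ⟨w', hsub, hz, hle⟩ := ih w₁ (by simp [← List.mem_toFinset, hsupp])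
    exact ⟨w', (subset_insert _ _).trans (hsupp ▸ hsub), hz, by omega⟩

lemma exists_closed_walk_covering [DecidableEq V] {r : V} (S : Finset V)
    (hS : ∀ v ∈ S, G.Reachable r v) :
    ∃ w : G.Walk r r, (∀ v ∈ S, v ∈ w.support) ∧ w.length + 2 ≤ 2 * #w.support.toFinset := by
  induction S using Finset.induction with
  | empty => exact ⟨nil, by simp, by simp⟩
  | @insert v S _ ih =>
    obtain ⟨w, hcov, hlen⟩ := ih fun x hx ↦ hS x (mem_insert_of_mem hx)
    obtain ⟨w', hsub, hv, hle⟩ :=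
      (hS v (mem_insert_self v S)).some.exists_extend_to_mem_support w w.start_mem_support
    refine ⟨w', ?_, by have := card_le_card hsub; omega⟩
    simp only [mem_insert, forall_eq_or_imp]
    exact ⟨hv, fun x hx ↦ by simpa using hsub (by simpa using hcov x hx)⟩

lemma exists_mem_support_take_drop {u v x : V} (w : G.Walk u v) {c k : ℕ} (hk : 0 < k)
    (hlen : w.length ≤ c * k) (hx : x ∈ w.support) :
    ∃ i < k, x ∈ ((w.drop (i * c)).take c).support := by
  obtain ⟨j, rfl, hj⟩ := mem_support_iff_exists_getVert.1 hx
  obtain ⟨i, hi, hij, hji⟩ := Nat.exists_lt_mul_le_le_mul_add hk (hj.trans hlen)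
  refine ⟨i, hi, ?_⟩
  have : ((w.drop (i * c)).take c).getVert (j - i * c) = w.getVert j := by
    rw [take_getVert, drop_getVert]
    congr 1
    omega
  exact this ▸ getVert_mem_support _ _

end SimpleGraph.Walk

namespace ExplorationTree

variable (T : ExplorationTree)

lemma mem_verts_of_mem_support {a b x : ℕ} (w : T.G.Walk a b) (ha : a ∈ T.verts)
    (hx : x ∈ w.support) : x ∈ T.verts := by
  induction w with
  | nil => simp_all
  | cons h _ ih =>
    rcases List.mem_cons.1 hx with rfl | hx
    · exact ha
    · exact ih (T.adj_mem _ _ h).2 hx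

lemma dist_root_le_height {v : ℕ} (hv : v ∈ T.verts) : T.G.dist T.root v ≤ T.height :=
  le_sup (f := fun v ↦ T.G.dist T.root v) hv

lemma exists_closed_walk_covering :
    ∃ w : T.G.Walk T.root T.root, (∀ v ∈ T.verts, v ∈ w.support) ∧ w.length + 2 ≤ 2 * T.card := by
  classical
  obtain ⟨w, hcov, hlen⟩ := SimpleGraph.Walk.exists_closed_walk_covering T.verts T.reach
  have : #w.support.toFinset ≤ T.card :=
    card_le_card fun x hx ↦ T.mem_verts_of_mem_support w T.root_mem (List.mem_toFinset.1 hx)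
  exact ⟨w, hcov, by omega⟩

lemma coverWalks_of_walk {u : ℕ} (w : T.G.Walk T.root u) (hcov : ∀ v ∈ T.verts, v ∈ w.support)
    {c k : ℕ} (hk : 0 < k) (hlen : w.length ≤ c * k) : CoverWalks T k (T.height + c) := by
  have hstart (i : ℕ) : w.getVert i ∈ T.verts :=
    T.mem_verts_of_mem_support w T.root_mem (w.getVert_mem_support i)
  choose p hp using fun i : Fin k ↦ (T.reach _ (hstart (i * c))).exists_walk_length_eq_dist
  refine ⟨_, fun i ↦ (p i).append ((w.drop (i * c)).take c), fun i ↦ ?_, fun v hv ↦ ?_⟩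
  · have := T.dist_root_le_height (hstart (i * c))
    simp only [SimpleGraph.Walk.length_append, SimpleGraph.Walk.take_length, hp]
    omega
  · obtain ⟨i, hi, hv⟩ := w.exists_mem_support_take_drop hk hlen (hcov v hv)
    exact ⟨⟨i, hi⟩, (SimpleGraph.Walk.mem_support_append_iff _ _).2 (Or.inr hv)⟩

end ExplorationTree

theorem offline_upper_bound_general (T : ExplorationTree)
    (k : ℕ) (hk : 0 < k) :
    CoverWalks T k (T.height + ⌈(2 * ((T.card : ℝ) - 1)) / (k : ℝ)⌉₊) := by
  obtain ⟨w, hcov, hlen⟩ := T.exists_closed_walk_covering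
  refine T.coverWalks_of_walk w hcov hk ?_
  have hcard : 1 ≤ T.card := card_pos.2 ⟨_, T.root_mem⟩
  have hceil := (div_le_iff₀ (by positivity : (0 : ℝ) < k)).1
    (Nat.le_ceil ((2 * ((T.card : ℝ) - 1)) / (k : ℝ)))
  have : 2 * (T.card - 1) ≤ ⌈(2 * ((T.card : ℝ) - 1)) / (k : ℝ)⌉₊ * k := by
    rw [← Nat.cast_le (α := ℝ)]
    push_cast [hcard]
    exact hceil
  omega

/-- Every rooted tree with `n ≥ 2` vertices and height `D`
can be covered by `k` walks from the root, each of length at most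
`D + ⌈2(n−1)/k⌉`; hence offline exploration takes `O(n/k + D)` rounds. -/
theorem offline_upper_bound (T : ExplorationTree) (hn : 2 ≤ T.card)
    (k : ℕ) (hk : 0 < k) :
    CoverWalks T k (T.height + ⌈(2 * ((T.card : ℝ) - 1)) / (k : ℝ)⌉₊) :=
  offline_upper_bound_general T k hk
end

section
/- For every integer c ≥ 1 there exists a threshold n₀ ∈ ℕ such that for all integers n ≥ n₀ and all integers k with √n ≤ k ≤ n·(log n)^c, setting m = ⌈log n / ((8 + c)·log log n)⌉ and L = ⌈n/(m·k)⌉, the following two inequalities hold: n ≥ L·16^m and k ≤ n^{1+1/m} / (6·L·(m+1)²·(2L)^{1/m}). -/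
private lemma aux_x7 {m x : ℝ} (hm : 0 ≤ m) (h1 : m + 1 ≤ x) (h2 : 48 ≤ x) :
    12 * (m + 1) ^ 2 ≤ x ^ 3 := by
  nlinarith [mul_le_mul h1 h1 (by linarith) (by linarith),
    mul_nonneg (mul_nonneg (show (0:ℝ) ≤ x by linarith) (show (0:ℝ) ≤ x by linarith))
      (show (0:ℝ) ≤ x - 12 by linarith)]

private lemma aux_dd {m t : ℝ} (h2 : t ≤ 2) (h0 : 0 < t) (hm : 0 ≤ m) :
    6 * 1 * (m + 1) ^ 2 * t ≤ 12 * (m + 1) ^ 2 := by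
  nlinarith [sq_nonneg (m + 1)]

private lemma aux_h8 {cr y m x : ℝ} (hc : 1 ≤ cr) (hy : 0 < y) (hm : 0 < m)
    (h : (7 + cr) * y * m ≤ x) : 8 * y * m ≤ x := by
  nlinarith [mul_nonneg (mul_nonneg (sub_nonneg.2 hc) hy.le) hm.le]

private lemma aux_48m {m x : ℝ} (hm : 0 ≤ m) (h1 : m + 1 ≤ x) (h2 : 48 ≤ x) :
    48 * m ≤ x ^ 2 := by nlinarith

private lemma aux_step2 {n m Q : ℝ} (hn : 0 ≤ n) (hQ : 0 ≤ Q) (hm : 1 ≤ m) :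
    2 * n * (6 * (m + 1) ^ 2 * Q) ≤ n * (48 * m * Q) * m := by
  nlinarith [mul_nonneg (mul_nonneg (mul_nonneg hn hQ) (sub_nonneg.2 hm))
    (show (0:ℝ) ≤ 3 * m + 1 by linarith)]

set_option maxHeartbeats 1600000 in
/-- For every integer `c ≥ 1` there is a threshold `n₀` such
that for all `n ≥ n₀` and all integers `k` with `√n ≤ k ≤ n·(log n)^c`,
setting `m = ⌈log n / ((8+c)·log log n)⌉` and `L = ⌈n/(m·k)⌉`, we have
`n ≥ L·16^m` and `k ≤ n^{1+1/m} / (6·L·(m+1)²·(2L)^{1/m})`. -/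
theorem params_loglog (c : ℕ) (hc : 1 ≤ c) :
    ∃ n₀ : ℕ, ∀ n : ℕ, n₀ ≤ n →
      ∀ k : ℕ, Real.sqrt n ≤ (k : ℝ) → (k : ℝ) ≤ (n : ℝ) * Real.log n ^ c →
        ∀ m L : ℕ,
          m = ⌈Real.log n / (((8 : ℝ) + c) * Real.log (Real.log n))⌉₊ →
          L = ⌈(n : ℝ) / ((m : ℝ) * k)⌉₊ →
          (L : ℝ) * 16 ^ m ≤ (n : ℝ) ∧
            (k : ℝ) ≤ (n : ℝ) ^ ((1 : ℝ) + 1 / (m : ℝ)) /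
              (6 * (L : ℝ) * ((m : ℝ) + 1) ^ 2 *
                (2 * (L : ℝ)) ^ ((1 : ℝ) / (m : ℝ))) := by
  refine ⟨⌈Real.exp (4 * ((8 : ℝ) + c) ^ 4 + 48)⌉₊ + 1, ?_⟩
  intro n hn k hk1 hk2 m L hm hL
  have hc1 : (1 : ℝ) ≤ c := by exact_mod_cast hc
  have hA : Real.exp (4 * ((8 : ℝ) + c) ^ 4 + 48) ≤ n := by
    calc Real.exp (4 * ((8 : ℝ) + c) ^ 4 + 48)
        ≤ (⌈Real.exp (4 * ((8 : ℝ) + c) ^ 4 + 48)⌉₊ : ℝ) := Nat.le_ceil _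
      _ ≤ n := by exact_mod_cast Nat.le_of_succ_le hn
  have hnpos : (0 : ℝ) < n := lt_of_lt_of_le (Real.exp_pos _) hA
  set x := Real.log n with hxdef
  set y := Real.log x with hydef
  have hxA : 4 * ((8 : ℝ) + c) ^ 4 + 48 ≤ x := (Real.le_log_iff_exp_le hnpos).2 hA
  have hx48 : (48 : ℝ) ≤ x := by nlinarith [pow_pos (show (0:ℝ) < 8 + c by linarith) 4]
  have hx0 : (0 : ℝ) < x := by linarith
  have hy3 : (3 : ℝ) ≤ y := by
    have h3 : Real.exp 3 ≤ x := by
      have he := Real.exp_one_lt_d9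
      have h : Real.exp 3 = Real.exp 1 * Real.exp 1 * Real.exp 1 := by
        rw [← Real.exp_add, ← Real.exp_add]; norm_num
      nlinarith [Real.exp_pos 1]
    exact (Real.le_log_iff_exp_le hx0).2 h3
  have hnx : (n : ℝ) = Real.exp x := (Real.exp_log hnpos).symm
  set s := Real.sqrt (n : ℝ) with hsdef
  have hs : s = Real.exp (x / 2) := by
    have h2 : Real.exp (x / 2) ^ 2 = Real.exp x := by
      rw [sq, ← Real.exp_add]; congr 1; ring
    rw [hsdef, hnx, ← h2, Real.sqrt_sq (Real.exp_pos _).le]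
  have hy2sx : y ≤ 2 * Real.sqrt x := by
    have h1 : Real.log (Real.sqrt x) ≤ Real.sqrt x - 1 :=
      Real.log_le_sub_one_of_pos (Real.sqrt_pos.2 hx0)
    rw [Real.log_sqrt hx0.le] at h1
    linarith
  have hden : (0 : ℝ) < ((8 : ℝ) + c) * y := by positivity
  set F := x / (((8 : ℝ) + c) * y) with hFdef
  have hxeq : x = F * (((8 : ℝ) + c) * y) := by
    rw [hFdef]; field_simp
  have hF8 : (8 : ℝ) + c ≤ F := by
    rw [hFdef, le_div_iff₀ hden]
    have hsx2 : Real.sqrt x * Real.sqrt x = x := Real.mul_self_sqrt hx0.le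
    have hsge : 2 * ((8 : ℝ) + c) ^ 2 ≤ Real.sqrt x := by
      have h2 : (2 * ((8 : ℝ) + c) ^ 2) ^ 2 ≤ x := by nlinarith
      calc 2 * ((8 : ℝ) + c) ^ 2 = Real.sqrt ((2 * ((8 : ℝ) + c) ^ 2) ^ 2) :=
            (Real.sqrt_sq (by positivity)).symm
        _ ≤ Real.sqrt x := Real.sqrt_le_sqrt h2
    nlinarith [Real.sqrt_nonneg x,
      mul_le_mul_of_nonneg_left hy2sx (show (0:ℝ) ≤ ((8:ℝ)+c)*((8:ℝ)+c) by positivity),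
      mul_le_mul_of_nonneg_right hsge (Real.sqrt_nonneg x)]
  have hmge : F ≤ (m : ℝ) := by rw [hm]; exact Nat.le_ceil _
  have hmle : (m : ℝ) ≤ F + 1 := by
    rw [hm]
    exact (Nat.ceil_lt_add_one (by positivity)).le
  have hm9 : (9 : ℝ) ≤ m := by linarith
  have hm0 : (0 : ℝ) < m := by linarith
  have hy0 : (0 : ℝ) < y := by linarith
  have hmyx : ((7 : ℝ) + c) * y * m ≤ x := by
    nlinarith [mul_le_mul_of_nonneg_left hmle (show (0:ℝ) ≤ ((7:ℝ)+c)*y by positivity),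
      mul_le_mul_of_nonneg_left hF8 (show (0:ℝ) ≤ y by linarith)]
  have hm2F : (m : ℝ) ≤ 2 * F := by linarith
  have hF27 : F ≤ x / 27 := by
    rw [le_div_iff₀ (by norm_num : (0:ℝ) < 27)]
    nlinarith [mul_le_mul_of_nonneg_left (show (27:ℝ) ≤ (8+(c:ℝ))*y by nlinarith)
      (show (0:ℝ) ≤ F by linarith)]
  have hmx1 : (m : ℝ) + 1 ≤ x := by linarith
  -- exponential facts
  have hX : Real.exp y = x := Real.exp_log hx0
  have hexpm : (n : ℝ) ^ ((1 : ℝ) / m) = Real.exp (x / m) := by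
    rw [Real.rpow_def_of_pos hnpos]
    congr 1
    ring
  have hxmge : ((7 : ℝ) + c) * y ≤ x / m := by
    rw [le_div_iff₀ hm0]
    exact hmyx
  -- k, L basics
  have hs25 : (25 : ℝ) ≤ s := by
    have := Real.add_one_le_exp (x / 2)
    rw [hs]; linarith
  have hk0 : (0 : ℝ) < k := by linarith
  have hL1 : (1 : ℝ) ≤ L := by
    have : 0 < L := by
      rw [hL, Nat.ceil_pos]
      positivity
    exact_mod_cast this
  have hLle : (L : ℝ) ≤ (n : ℝ) / (m * k) + 1 := by
    rw [hL]
    exact (Nat.ceil_lt_add_one (by positivity)).le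
  have hnmk : (n : ℝ) / (m * k) ≤ s / m := by
    rw [div_le_div_iff₀ (by positivity) hm0]
    have hss : s * s = (n : ℝ) := Real.mul_self_sqrt (by positivity)
    nlinarith [mul_le_mul_of_nonneg_left hk1 (show (0:ℝ) ≤ s by linarith)]
  have hsm : s / m ≤ s := by
    rw [div_le_iff₀ hm0]
    nlinarith
  have hL2s : (L : ℝ) ≤ 2 * s := by linarith
  -- 16^m ≤ exp(x/4)
  have h16 : (16 : ℝ) ^ m ≤ Real.exp (x / 4) := by
    have hlog16 : Real.log 16 ≤ 2.8 := by
      rw [show (16:ℝ) = 2 ^ 4 by norm_num, Real.log_pow]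
      have := Real.log_two_lt_d9
      push_cast
      linarith
    have hlog16' : (0:ℝ) ≤ Real.log 16 := Real.log_nonneg (by norm_num)
    have h1 : (16 : ℝ) ^ m = Real.exp ((m : ℝ) * Real.log 16) := by
      rw [Real.exp_nat_mul, Real.exp_log (by norm_num : (0:ℝ) < 16)]
    rw [h1]
    apply Real.exp_le_exp.2
    have hmx27 : (m : ℝ) ≤ 2 * (x / 27) := by linarith
    nlinarith [mul_le_mul hmx27 hlog16 hlog16' (show (0:ℝ) ≤ 2*(x/27) by linarith)]
  -- Goal 1
  have goal1 : (L : ℝ) * 16 ^ m ≤ (n : ℝ) := by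
    have e2 : Real.exp (x/2) * Real.exp (x/4) * Real.exp (x/4) = (n : ℝ) := by
      rw [← Real.exp_add, ← Real.exp_add, hnx]
      congr 1; ring
    have e3 : (2 : ℝ) ≤ Real.exp (x / 4) := by
      nlinarith [Real.add_one_le_exp (x / 4)]
    have step : (L : ℝ) * 16 ^ m ≤ (2 * s) * Real.exp (x / 4) :=
      mul_le_mul hL2s h16 (by positivity) (by linarith)
    rw [hs] at step
    nlinarith [Real.exp_pos (x/2), Real.exp_pos (x/4), step]
  -- Goal 2 reduction
  have hL0 : (0:ℝ) < L := by linarith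
  have hD0 : (0:ℝ) < 6 * (L : ℝ) * ((m : ℝ) + 1) ^ 2 * (2 * (L : ℝ)) ^ ((1 : ℝ) / m) := by
    have hr := Real.rpow_pos_of_pos (show (0:ℝ) < 2*(L:ℝ) by linarith) ((1:ℝ)/m)
    have hsq : (0:ℝ) < ((m : ℝ) + 1) ^ 2 := by positivity
    exact mul_pos (mul_pos (mul_pos (by norm_num) hL0) hsq) hr
  have hpow : (n : ℝ) ^ ((1:ℝ) + 1/m) = n * Real.exp (x/m) := by
    rw [Real.rpow_add hnpos, Real.rpow_one, hexpm]
  refine ⟨goal1, (le_div_iff₀ hD0).2 ?_⟩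
  rw [hpow]
  rcases le_or_gt ((n:ℝ)/(m*k)) 1 with hcase | hcase
  · -- Case A : L = 1
    have hLeq : L = 1 := by
      refine le_antisymm ?_ (by exact_mod_cast hL1)
      rw [hL]
      exact Nat.ceil_le.2 (by exact_mod_cast hcase)
    have hLR : (L:ℝ) = 1 := by rw [hLeq]; norm_num
    rw [hLR]
    have h2m : ((2:ℝ) * 1) ^ ((1:ℝ)/m) ≤ 2 := by
      rw [mul_one]
      calc (2:ℝ) ^ ((1:ℝ)/m) ≤ (2:ℝ) ^ (1:ℝ) :=
            Real.rpow_le_rpow_of_exponent_le (by norm_num)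
              (by rw [div_le_one hm0]; linarith)
        _ = 2 := Real.rpow_one 2
    have hx7 : 12 * ((m:ℝ)+1)^2 ≤ x^3 := aux_x7 hm0.le hmx1 hx48
    have hexpbig : x ^ 3 * x ^ c ≤ Real.exp (x / m) := by
      have e7 : Real.exp (((7 + c : ℕ) : ℝ) * y) = x ^ (7 + c) := by
        rw [Real.exp_nat_mul, hX]
      have h37 : x ^ 3 * x ^ c ≤ x ^ (7 + c) := by
        rw [pow_add]
        have h3 : x ^ 3 ≤ x ^ 7 := pow_le_pow_right₀ (by linarith) (by norm_num)
        exact mul_le_mul_of_nonneg_right h3 (by positivity)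
      refine le_trans h37 ?_
      rw [← e7]
      apply Real.exp_le_exp.2
      push_cast
      linarith [hxmge]
    have hrp0 : (0:ℝ) < ((2:ℝ)*1) ^ ((1:ℝ)/m) :=
      Real.rpow_pos_of_pos (by norm_num) _
    have h1 : (k:ℝ) * (6 * 1 * ((m:ℝ)+1)^2 * ((2:ℝ)*1) ^ ((1:ℝ)/m))
        ≤ ((n:ℝ) * x ^ c) * (12 * ((m:ℝ)+1)^2) := by
      have hdd : 6 * 1 * ((m:ℝ)+1)^2 * ((2:ℝ)*1) ^ ((1:ℝ)/m) ≤ 12 * ((m:ℝ)+1)^2 :=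
        aux_dd h2m hrp0 hm0.le
      exact mul_le_mul hk2 hdd (by positivity) (by positivity)
    have h2 : ((n:ℝ) * x ^ c) * (12 * ((m:ℝ)+1)^2) ≤ (n:ℝ) * (x^3 * x^c) := by
      calc ((n:ℝ) * x ^ c) * (12 * ((m:ℝ)+1)^2)
          ≤ ((n:ℝ) * x ^ c) * x^3 :=
            mul_le_mul_of_nonneg_left hx7 (by positivity)
        _ = (n:ℝ) * (x^3 * x^c) := by ring
    have h3 : (n:ℝ) * (x^3 * x^c) ≤ (n:ℝ) * Real.exp (x/m) :=
      mul_le_mul_of_nonneg_left hexpbig hnpos.le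
    linarith
  · -- Case B : k < n/m
    have hLle2 : (L : ℝ) ≤ 2 * ((n:ℝ)/(m*k)) := by linarith
    have hkL : (k:ℝ) * L ≤ 2 * n / m := by
      have he : (k:ℝ) * (2 * ((n:ℝ)/(m*k))) = 2*n/m := by
        field_simp
      calc (k:ℝ)*L ≤ k * (2*((n:ℝ)/(m*k))) := mul_le_mul_of_nonneg_left hLle2 hk0.le
        _ = 2*n/m := he
    have h2L : 2*(L:ℝ) ≤ 4*s := by linarith
    have hQpos : (0:ℝ) < 4*s := by linarith
    have hrpow : (2*(L:ℝ)) ^ ((1:ℝ)/m) ≤ (4*s) ^ ((1:ℝ)/m) :=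
      Real.rpow_le_rpow (by linarith) h2L (by positivity)
    have hQ0 : (0:ℝ) ≤ (4*s) ^ ((1:ℝ)/m) := (Real.rpow_pos_of_pos hQpos _).le
    have hkey : 48*(m:ℝ) * (4*s) ^ ((1:ℝ)/m) ≤ Real.exp (x/m) := by
      have hlog4s : Real.log (4*s) = Real.log 4 + x/2 := by
        rw [Real.log_mul (by norm_num) (by linarith), hs, Real.log_exp]
      have hQ : (4*s) ^ ((1:ℝ)/m) = Real.exp ((Real.log 4 + x/2) / m) := by
        rw [Real.rpow_def_of_pos hQpos, hlog4s]
        congr 1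
        ring
      have hsplit : Real.exp ((Real.log 4 + x/2)/m) * Real.exp ((x/2 - Real.log 4)/m)
          = Real.exp (x/m) := by
        rw [← Real.exp_add]
        congr 1
        field_simp
        ring
      have hlog4 : Real.log 4 ≤ 1.4 := by
        rw [show (4:ℝ) = 2^2 by norm_num, Real.log_pow]
        have := Real.log_two_lt_d9
        push_cast
        linarith
      have h2ym : 2*y ≤ (x/2 - Real.log 4)/m := by
        rw [le_div_iff₀ hm0]
        have h8 : 8*y*(m:ℝ) ≤ x := aux_h8 hc1 hy0 hm0 hmyx
        linarith
      have hx2 : x^2 ≤ Real.exp ((x/2 - Real.log 4)/m) := by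
        calc x^2 = Real.exp (2*y) := by
              rw [two_mul, Real.exp_add, ← hX]
              ring
          _ ≤ _ := Real.exp_le_exp.2 h2ym
      have h48m : 48*(m:ℝ) ≤ x^2 := aux_48m hm0.le hmx1 hx48
      calc 48*(m:ℝ)*(4*s)^((1:ℝ)/m) ≤ x^2 * (4*s)^((1:ℝ)/m) :=
            mul_le_mul_of_nonneg_right h48m hQ0
        _ ≤ Real.exp ((x/2 - Real.log 4)/m) * (4*s)^((1:ℝ)/m) :=
            mul_le_mul_of_nonneg_right hx2 hQ0
        _ = Real.exp (x/m) := by rw [hQ, mul_comm, hsplit]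
    have hr0 : (0:ℝ) ≤ (2*(L:ℝ)) ^ ((1:ℝ)/m) :=
      (Real.rpow_pos_of_pos (by linarith) _).le
    have step1 : (k:ℝ) * (6 * L * ((m:ℝ)+1)^2 * (2*(L:ℝ)) ^ ((1:ℝ)/m))
        ≤ (2*(n:ℝ)/m) * (6*((m:ℝ)+1)^2*((4*s) ^ ((1:ℝ)/m))) := by
      have heq : (k:ℝ) * (6 * L * ((m:ℝ)+1)^2 * (2*(L:ℝ)) ^ ((1:ℝ)/m))
          = ((k:ℝ)*L) * (6*((m:ℝ)+1)^2*((2*(L:ℝ)) ^ ((1:ℝ)/m))) := by ring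
      rw [heq]
      apply mul_le_mul hkL
      · exact mul_le_mul_of_nonneg_left hrpow (by positivity)
      · positivity
      · positivity
    have step2 : (2*(n:ℝ)/m) * (6*((m:ℝ)+1)^2*((4*s) ^ ((1:ℝ)/m)))
        ≤ (n:ℝ) * (48*(m:ℝ) * (4*s) ^ ((1:ℝ)/m)) := by
      rw [div_mul_eq_mul_div, div_le_iff₀ hm0]
      exact aux_step2 hnpos.le hQ0 (by linarith)
    have step3 : (n:ℝ) * (48*(m:ℝ) * (4*s) ^ ((1:ℝ)/m)) ≤ (n:ℝ) * Real.exp (x/m) :=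
      mul_le_mul_of_nonneg_left hkey hnpos.le
    linarith
end

section
/- Let n, L, m be positive integers with m ≥ 2 and n ≥ L·16^m, and set α = (2L/n)^{1/m}. Define the integer sequence s₁, …, s_{m−1} by s₁ = ⌈α·⌈n/(2L)⌉⌉ and s_i = ⌈α·s_{i−1}⌉ for 2 ≤ i ≤ m−1. Then for every 1 ≤ i ≤ m−1: s_i ≥ α^i·n/(2L) ≥ 1/α and s_i ≤ (2α)^i·n/(2L). (These are the bounds on the sizes |S_i| of the branching sets in the lower-bound construction.) -/
/-- For positive integers `n, L, m` with `m ≥ 2`,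
`n ≥ L·16^m` and `α = (2L/n)^{1/m}`, the sequence defined by
`s₁ = ⌈α·⌈n/(2L)⌉⌉` and `s_i = ⌈α·s_{i−1}⌉` for `2 ≤ i ≤ m−1` satisfies
`α^i·n/(2L) ≤ s_i`, `1/α ≤ α^i·n/(2L)` and `s_i ≤ (2α)^i·n/(2L)` for all
`1 ≤ i ≤ m−1`. -/
theorem branching_set_bounds (n L m : ℕ) (hn : 0 < n) (hL : 0 < L) (hm : 2 ≤ m)
    (h16 : (L : ℝ) * 16 ^ m ≤ (n : ℝ)) (α : ℝ)
    (hα : α = (2 * (L : ℝ) / (n : ℝ)) ^ ((1 : ℝ) / (m : ℝ)))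
    (s : ℕ → ℕ)
    (hs1 : s 1 = ⌈α * (⌈(n : ℝ) / (2 * (L : ℝ))⌉₊ : ℝ)⌉₊)
    (hsi : ∀ i : ℕ, 2 ≤ i → i ≤ m - 1 → s i = ⌈α * (s (i - 1) : ℝ)⌉₊) :
    ∀ i : ℕ, 1 ≤ i → i ≤ m - 1 →
      α ^ i * (n : ℝ) / (2 * (L : ℝ)) ≤ (s i : ℝ) ∧
        1 / α ≤ α ^ i * (n : ℝ) / (2 * (L : ℝ)) ∧
        (s i : ℝ) ≤ (2 * α) ^ i * (n : ℝ) / (2 * (L : ℝ)) := by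
  have hn' : (0:ℝ) < n := by exact_mod_cast hn
  have hL' : (0:ℝ) < L := by exact_mod_cast hL
  have hmpos : 0 < m := by omega
  have hm0 : (m:ℝ) ≠ 0 := by positivity
  have hx : (0:ℝ) < 2 * L / n := by positivity
  have hαpos : 0 < α := by rw [hα]; positivity
  have hαm : α ^ m = 2 * (L:ℝ) / n := by
    rw [hα, ← Real.rpow_natCast _ m, ← Real.rpow_mul hx.le, one_div,
      inv_mul_cancel₀ hm0, Real.rpow_one]
  have hα18 : α ≤ 1 / 8 := by
    have h2m : (2:ℝ) ≤ 2 ^ m := by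
      calc (2:ℝ) = 2 ^ 1 := (pow_one 2).symm
      _ ≤ 2 ^ m := pow_le_pow_right₀ one_le_two (by omega)
    have h8 : (0:ℝ) < 8 ^ m := by positivity
    have hpm : α ^ m ≤ (1/8 : ℝ) ^ m := by
      rw [hαm, div_pow, one_pow, div_le_div_iff₀ hn' h8]
      have h16m : (16:ℝ) ^ m = 8 ^ m * 2 ^ m := by
        rw [← mul_pow]; norm_num
      nlinarith [h16, pow_pos (show (0:ℝ) < 8 by norm_num) m, hL']
    exact le_of_pow_le_pow_left₀ (by omega) (by norm_num) hpm
  have hα1 : α < 1 := lt_of_le_of_lt hα18 (by norm_num)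
  have hinv : (8:ℝ) ≤ 1 / α := by
    rw [le_div_iff₀ hαpos]; nlinarith
  have hmid : ∀ i : ℕ, i ≤ m - 1 → 1 / α ≤ α ^ i * (n:ℝ) / (2 * L) := by
    intro i hi
    have him : i + 1 ≤ m := by omega
    have h1 : α ^ m ≤ α ^ (i+1) := pow_le_pow_of_le_one hαpos.le hα1.le him
    have h2 : (1:ℝ) ≤ α ^ (i+1) * n / (2 * L) := by
      have heq : α ^ m * (n:ℝ) / (2 * L) = 1 := by
        rw [hαm]; field_simp
      calc (1:ℝ) = α ^ m * n / (2 * L) := heq.symm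
      _ ≤ α ^ (i+1) * n / (2 * L) := by gcongr
    rw [div_le_iff₀ hαpos]
    have heq2 : α ^ i * (n:ℝ) / (2 * L) * α = α ^ (i+1) * n / (2 * L) := by ring
    rw [heq2]; exact h2
  intro i hi1
  induction i, hi1 using Nat.le_induction with
  | base =>
    intro him
    have hc1 : (n:ℝ) / (2 * L) ≤ ((⌈(n : ℝ) / (2 * (L : ℝ))⌉₊ : ℝ)) := Nat.le_ceil _
    have hc2 : ((⌈(n : ℝ) / (2 * (L : ℝ))⌉₊ : ℝ)) < (n:ℝ) / (2 * L) + 1 :=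
      Nat.ceil_lt_add_one (by positivity)
    obtain ⟨c, hc⟩ : ∃ c : ℝ, ((⌈(n : ℝ) / (2 * (L : ℝ))⌉₊ : ℝ)) = c := ⟨_, rfl⟩
    rw [hc] at hs1 hc1 hc2
    have hcnn : (0:ℝ) ≤ c := by rw [← hc]; positivity
    have hc0 : 0 ≤ α * c := mul_nonneg hαpos.le hcnn
    have hlow : α * ((n:ℝ) / (2 * L)) ≤ (s 1 : ℝ) := by
      rw [hs1]
      calc α * ((n:ℝ) / (2 * L)) ≤ α * c := by gcongr
      _ ≤ (⌈α * c⌉₊ : ℝ) := Nat.le_ceil _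
    have hmid1 := hmid 1 him
    refine ⟨by rw [pow_one, mul_div_assoc]; exact hlow, hmid1, ?_⟩
    have hup : (s 1 : ℝ) < α * c + 1 := by
      rw [hs1]; exact Nat.ceil_lt_add_one hc0
    have hkey : 1 / α ≤ α * (n:ℝ) / (2 * L) := by
      rw [pow_one] at hmid1; exact hmid1
    rw [pow_one]
    have hαc : α * c < α * ((n:ℝ) / (2 * L) + 1) :=
      mul_lt_mul_of_pos_left hc2 hαpos
    have hX : (8:ℝ) ≤ α * n / (2 * L) := le_trans hinv hkey
    have hexp : α * ((n:ℝ) / (2 * L) + 1) = α * n / (2 * L) + α := by ring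
    rw [hexp] at hαc
    have hdbl : 2 * α * (n:ℝ) / (2 * L) = 2 * (α * n / (2 * L)) := by ring
    rw [hdbl]
    linarith [hαc, hup, hX, hα18]
  | succ i hi ih =>
    intro him
    obtain ⟨ihl, ihm, ihu⟩ := ih (by omega)
    have hs : s (i+1) = ⌈α * (s i : ℝ)⌉₊ := by
      have h := hsi (i+1) (by omega) him
      simpa using h
    refine ⟨?_, hmid _ him, ?_⟩
    · rw [hs]
      have heq : α ^ (i+1) * (n:ℝ) / (2 * L) = α * (α ^ i * n / (2 * L)) := by ring
      rw [heq]
      exact le_trans (mul_le_mul_of_nonneg_left ihl hαpos.le) (Nat.le_ceil _)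
    · rw [hs]
      have hlt : (⌈α * (s i : ℝ)⌉₊ : ℝ) < α * s i + 1 :=
        Nat.ceil_lt_add_one (by positivity)
      have h1 : α * (s i : ℝ) ≤ α * ((2 * α) ^ i * n / (2 * L)) :=
        mul_le_mul_of_nonneg_left ihu hαpos.le
      have hmid' := hmid (i+1) him
      have hA : (1:ℝ) ≤ α ^ (i+1) * n / (2 * L) := le_trans (by linarith) hmid'
      have h2pow : (2:ℝ) ≤ 2 ^ (i+1) := by
        calc (2:ℝ) = 2 ^ 1 := (pow_one 2).symm
        _ ≤ 2 ^ (i+1) := pow_le_pow_right₀ one_le_two (by omega)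
      have hmp : (2 * α) ^ (i+1) * (n:ℝ) / (2 * L) =
          2 ^ (i+1) * (α ^ (i+1) * n / (2 * L)) := by
        rw [mul_pow]; ring
      have h3 : (2:ℝ) ≤ (2 * α) ^ (i+1) * n / (2 * L) := by
        rw [hmp]
        have := mul_le_mul h2pow hA (by norm_num) (by positivity)
        linarith
      have h4 : α * ((2 * α) ^ i * (n:ℝ) / (2 * L)) =
          (2 * α) ^ (i+1) * n / (2 * L) / 2 := by
        rw [pow_succ]; ring
      rw [h4] at h1
      linarith [hlt, h1, h3]
end
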